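/- arXiv:1801.10570 — 2 statements merged into one kernel-verified Lean document; each statement's English description precedes it below -/
import Mathlib

section
/- Let N be a positive natural number, let a₁ ≥ a₂ ≥ ... ≥ aₙ ≥ 0 and 0 = b₀ < b₁ < ... < b_N be real numbers, and let s ≥ 1. Then (∑_{j=1}^N a_j^s (b_j^s − b_{j−1}^s))^{1/s} ≤ ∑_{j=1}^N a_j (b_j − b_{j−1}). -/
open MeasureTheory ENNReal Set

/-- Distribution function of an `ℝ≥0∞`-valued function. -/
noncomputable def distFn {X : Type*} [MeasurableSpace X] (μ : Measure X)
    (g : X → ℝ≥0∞) (s : ℝ≥0∞) : ℝ≥0∞ :=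
  μ {x | s < g x}

/-- Nonincreasing rearrangement. -/
noncomputable def rearr {X : Type*} [MeasurableSpace X] (μ : Measure X)
    (g : X → ℝ≥0∞) (t : ℝ) : ℝ≥0∞ :=
  sInf {s : ℝ≥0∞ | distFn μ g s ≤ ENNReal.ofReal t}

/-- The `ℝ≥0∞`-valued absolute value of a real function. -/
noncomputable def eAbs {X : Type*} (f : X → ℝ) : X → ℝ≥0∞ := fun x => ENNReal.ofReal |f x|

/-- Lorentz quasi-norm via the rearrangement, finite secondary exponent `r`. -/
noncomputable def lorentzR {X : Type*} [MeasurableSpace X] (μ : Measure X)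
    (g : X → ℝ≥0∞) (p r : ℝ) : ℝ≥0∞ :=
  (ENNReal.ofReal (r / p) *
      ∫⁻ t in Ioi (0 : ℝ),
        (ENNReal.ofReal t ^ (1 / p) * rearr μ g t) ^ r * ENNReal.ofReal t⁻¹) ^ (1 / r)

/-- Lorentz quasi-norm via the rearrangement, `r = ∞`. -/
noncomputable def lorentzTop {X : Type*} [MeasurableSpace X] (μ : Measure X)
    (g : X → ℝ≥0∞) (p : ℝ) : ℝ≥0∞ :=
  ⨆ t ∈ Ioi (0 : ℝ), ENNReal.ofReal t ^ (1 / p) * rearr μ g t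

/-- Lorentz quasi-norm via the rearrangement, `0 < r ≤ ∞`. -/
noncomputable def lorentz {X : Type*} [MeasurableSpace X] (μ : Measure X)
    (g : X → ℝ≥0∞) (p : ℝ) (r : ℝ≥0∞) : ℝ≥0∞ :=
  if r = ∞ then lorentzTop μ g p else lorentzR μ g p r.toReal

/-- Lorentz quasi-norm via the distribution function, finite secondary exponent `r`. -/
noncomputable def lorentzD {X : Type*} [MeasurableSpace X] (μ : Measure X)
    (g : X → ℝ≥0∞) (p r : ℝ) : ℝ≥0∞ :=
  (ENNReal.ofReal r *
      ∫⁻ a in Ioi (0 : ℝ),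
        (distFn μ g (ENNReal.ofReal a) ^ (1 / p) * ENNReal.ofReal a) ^ r *
          ENNReal.ofReal a⁻¹) ^ (1 / r)

/-- Weak-type Lorentz quasi-norm via the distribution function. -/
noncomputable def lorentzDTop {X : Type*} [MeasurableSpace X] (μ : Measure X)
    (g : X → ℝ≥0∞) (p : ℝ) : ℝ≥0∞ :=
  ⨆ a ∈ Ioi (0 : ℝ), ENNReal.ofReal a * distFn μ g (ENNReal.ofReal a) ^ (1 / p)

/-- Lorentz quasi-norm via the distribution function, `0 < r ≤ ∞`. -/
noncomputable def lorentzDE {X : Type*} [MeasurableSpace X] (μ : Measure X)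
    (g : X → ℝ≥0∞) (p : ℝ) (r : ℝ≥0∞) : ℝ≥0∞ :=
  if r = ∞ then lorentzDTop μ g p else lorentzD μ g p r.toReal

/-- A measure is nonatomic if every set of positive measure has a subset of
strictly smaller positive measure. -/
def Nonatomic {X : Type*} [MeasurableSpace X] (μ : Measure X) : Prop :=
  ∀ s : Set X, MeasurableSet s → 0 < μ s →
    ∃ t, t ⊆ s ∧ MeasurableSet t ∧ 0 < μ t ∧ μ t < μ s

/-- The `ℓ^r` norm of a sequence of extended nonnegative reals, `0 < r ≤ ∞`. -/
noncomputable def ellr {ι : Type*} (r : ℝ≥0∞) (c : ι → ℝ≥0∞) : ℝ≥0∞ :=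
  if r = ∞ then ⨆ k, c k else (∑' k, c k ^ r.toReal) ^ (1 / r.toReal)

/-!
Raise both sides to the power `s` and induct on `N`. With `α = a (n + 1)`, appending the term
`j = n + 1` adds `(α b_{n+1})^s - (α b_n)^s` on the left. Since `α` lies below every earlier `a_j`
and the `b_j - b_{j-1}` telescope to `b_n`, the base point `α b_n` is at most the partial sum
`R_n` on the right, and the increments of the convex map `x ↦ x^s` grow with the base point, so
the added term is at most `(R_n + α (b_{n+1} - b_n))^s - R_n^s = R_{n+1}^s - R_n^s`.
-/

theorem ConvexOn.map_add_sub_map_le {𝕜 : Type*} [Field 𝕜] [LinearOrder 𝕜] [IsStrictOrderedRing 𝕜]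
    {D : Set 𝕜} {f : 𝕜 → 𝕜} (hf : ConvexOn 𝕜 D f) {x y c : 𝕜} (hx : x ∈ D) (hyc : y + c ∈ D)
    (hxy : x ≤ y) (hc : 0 ≤ c) : f (x + c) - f x ≤ f (y + c) - f y := by
  rcases hc.eq_or_lt with rfl | hc
  · simp
  rcases hxy.eq_or_lt with rfl | hxy
  · rfl
  have hxc : x + c ∈ D := hf.1.ordConnected.out hx hyc ⟨by linarith, by linarith⟩
  have hy : y ∈ D := hf.1.ordConnected.out hx hyc ⟨hxy.le, by linarith⟩
  -- slope on `[x, x + c]` ≤ slope on `[x, y + c]` ≤ slope on `[y, y + c]`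
  have h₁ := hf.secant_mono hx hxc hyc (by linarith) (by linarith) (by linarith)
  have h₂ := hf.secant_mono hyc hx hy (by linarith) (by linarith) hxy.le
  rw [← neg_div_neg_eq, neg_sub, neg_sub, ← neg_div_neg_eq (f y - _), neg_sub, neg_sub] at h₂
  have := h₁.trans h₂
  rwa [add_sub_cancel_left, add_sub_cancel_left, div_le_div_iff_of_pos_right hc] at this

theorem Real.add_rpow_sub_rpow_le {s : ℝ} (hs : 1 ≤ s) {x y c : ℝ} (hx : 0 ≤ x) (hxy : x ≤ y)
    (hc : 0 ≤ c) : (x + c) ^ s - x ^ s ≤ (y + c) ^ s - y ^ s :=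
  (convexOn_rpow hs).map_add_sub_map_le hx (by simp only [mem_Ici]; linarith) hxy hc

theorem Finset.sum_Icc_one_sub_pred (b : ℕ → ℝ) (n : ℕ) :
    ∑ j ∈ Finset.Icc 1 n, (b j - b (j - 1)) = b n - b 0 := by
  induction n with
  | zero => simp
  | succ n ih => rw [Finset.sum_Icc_succ_top (by omega), ih]; simp

theorem mul_sub_le_sum_mul_sub {n : ℕ} {a b : ℕ → ℝ} {x : ℝ} (hx : ∀ j ∈ Finset.Icc 1 n, x ≤ a j)
    (hb : MonotoneOn b (Iic n)) :
    x * (b n - b 0) ≤ ∑ j ∈ Finset.Icc 1 n, a j * (b j - b (j - 1)) := by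
  rw [← Finset.sum_Icc_one_sub_pred, Finset.mul_sum]
  refine Finset.sum_le_sum fun j hj ↦ mul_le_mul_of_nonneg_right (hx j hj) ?_
  have hj' := Finset.mem_Icc.1 hj
  exact sub_nonneg.2 (hb (mem_Iic.2 (by omega)) (mem_Iic.2 hj'.2) (by omega))

theorem sum_rpow_mul_sub_rpow_le_rpow_sum {s : ℝ} (hs : 1 ≤ s) {n : ℕ} {a b : ℕ → ℝ}
    (ha₀ : ∀ j ∈ Finset.Icc 1 n, 0 ≤ a j) (ha : AntitoneOn a (Icc 1 n)) (hb₀ : b 0 = 0)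
    (hb : MonotoneOn b (Iic n)) :
    ∑ j ∈ Finset.Icc 1 n, a j ^ s * (b j ^ s - b (j - 1) ^ s)
      ≤ (∑ j ∈ Finset.Icc 1 n, a j * (b j - b (j - 1))) ^ s := by
  induction n with
  | zero => simp [Real.zero_rpow (by positivity : s ≠ 0)]
  | succ n ih =>
    have hb_n := hb.mono (Iic_subset_Iic.2 n.le_succ)
    have IH := ih (fun j hj ↦ ha₀ j (Finset.Icc_subset_Icc_right n.le_succ hj))
      (ha.mono (Icc_subset_Icc_right n.le_succ)) hb_n
    set S := ∑ j ∈ Finset.Icc 1 n, a j * (b j - b (j - 1))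
    set c := a (n + 1) * (b (n + 1) - b n)
    have ha' : 0 ≤ a (n + 1) := ha₀ _ (by simp)
    have hbn : 0 ≤ b n := hb₀ ▸ hb (by simp) (by simp) (Nat.zero_le _)
    have hbn' : b n ≤ b (n + 1) := hb (by simp) (by simp) n.le_succ
    have hS : a (n + 1) * b n ≤ S := by
      have hle : ∀ j ∈ Finset.Icc 1 n, a (n + 1) ≤ a j := fun j hj ↦ by
        have hj' := Finset.mem_Icc.1 hj
        exact ha ⟨hj'.1, by omega⟩ ⟨by omega, le_rfl⟩ (by omega)
      simpa [hb₀] using mul_sub_le_sum_mul_sub hle hb_n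
    have hstep : (a (n + 1) * b n + c) ^ s - (a (n + 1) * b n) ^ s ≤ (S + c) ^ s - S ^ s :=
      Real.add_rpow_sub_rpow_le hs (by positivity) hS (mul_nonneg ha' (sub_nonneg.2 hbn'))
    rw [Finset.sum_Icc_succ_top (by omega), Finset.sum_Icc_succ_top (by omega),
      Nat.add_sub_cancel]
    calc _ ≤ S ^ s + ((a (n + 1) * b n + c) ^ s - (a (n + 1) * b n) ^ s) := by
          rw [show a (n + 1) * b n + c = a (n + 1) * b (n + 1) by ring,
            Real.mul_rpow ha' hbn, Real.mul_rpow ha' (hbn.trans hbn'), ← mul_sub]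
          exact add_le_add_left IH _
      _ ≤ (S + c) ^ s := by linarith

theorem stmt1_general (N : ℕ) (a b : ℕ → ℝ) (s : ℝ) (hs : 1 ≤ s)
    (ha_nonneg : ∀ j, 1 ≤ j → j ≤ N → 0 ≤ a j)
    (ha_anti : ∀ i j, 1 ≤ i → i ≤ j → j ≤ N → a j ≤ a i)
    (hb0 : b 0 = 0)
    (hb_mono : ∀ i j, i < j → j ≤ N → b i < b j) :
    (∑ j ∈ Finset.Icc 1 N, a j ^ s * (b j ^ s - b (j - 1) ^ s)) ^ (1 / s)
      ≤ ∑ j ∈ Finset.Icc 1 N, a j * (b j - b (j - 1)) := by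
  have ha₀ : ∀ j ∈ Finset.Icc 1 N, 0 ≤ a j := fun j hj ↦ (Finset.mem_Icc.1 hj).elim (ha_nonneg j)
  have ha : AntitoneOn a (Icc 1 N) := fun i hi j hj hij ↦ ha_anti i j hi.1 hij hj.2
  have hb : MonotoneOn b (Iic N) :=
    StrictMonoOn.monotoneOn fun i _ j hj hij ↦ hb_mono i j hij hj
  have hbs : MonotoneOn (fun j ↦ b j ^ s) (Iic N) := fun i hi j hj hij ↦
    Real.rpow_le_rpow (hb0 ▸ hb (by simp) hi (Nat.zero_le i)) (hb hi hj hij) (by linarith)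
  have hL : 0 ≤ ∑ j ∈ Finset.Icc 1 N, a j ^ s * (b j ^ s - b (j - 1) ^ s) := by
    simpa using mul_sub_le_sum_mul_sub (fun j hj ↦ Real.rpow_nonneg (ha₀ j hj) s) hbs
  have hR : 0 ≤ ∑ j ∈ Finset.Icc 1 N, a j * (b j - b (j - 1)) := by
    simpa using mul_sub_le_sum_mul_sub ha₀ hb
  rw [one_div, Real.rpow_inv_le_iff_of_pos hL hR (by linarith)]
  exact sum_rpow_mul_sub_rpow_le_rpow_sum hs ha₀ ha hb0 hb

theorem stmt1 (N : ℕ) (hN : 1 ≤ N) (a b : ℕ → ℝ) (s : ℝ) (hs : 1 ≤ s)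
    (ha_nonneg : ∀ j, 1 ≤ j → j ≤ N → 0 ≤ a j)
    (ha_anti : ∀ i j, 1 ≤ i → i ≤ j → j ≤ N → a j ≤ a i)
    (hb0 : b 0 = 0)
    (hb_mono : ∀ i j, i < j → j ≤ N → b i < b j) :
    (∑ j ∈ Finset.Icc 1 N, a j ^ s * (b j ^ s - b (j - 1) ^ s)) ^ (1 / s)
      ≤ ∑ j ∈ Finset.Icc 1 N, a j * (b j - b (j - 1)) :=
  stmt1_general N a b s hs ha_nonneg ha_anti hb0 hb_mono
end

section
/- Let b > 0, ρ > 1, 0 < p < ∞, 0 < r ≤ ∞, and let (A_j)_{j∈Z} with Z ⊆ ℤ be measurable sets with μ(A_j) ≥ b ρ^j. Let β : Z → [0,∞) with β ∈ ℓ^r. If |f(x)| ≥ ∑_{j∈Z} β(j) ρ^{−j/p} 1_{A_j}(x) almost everywhere, then ‖f‖_{L^{p,r}} ≥ c (∑_{j∈Z} β(j)^r)^{1/r}, for a constant c depending only on p, r, b, ρ. -/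
open MeasureTheory ENNReal Set

/-!
If `t < b * ρ ^ j`, the set `A j` has measure larger than `t` and `|f| ≥ β j * ρ ^ (-j / p)` on
it, so the rearrangement satisfies `f* t ≥ β j * ρ ^ (-j / p)`. On `[b * ρ ^ (j - 1), b * ρ ^ j)`
this gives `t ^ (1 / p) * f* t ≥ (b / ρ) ^ (1 / p) * β j`: the function inside the Lorentz
quasi-norm dominates a staircase with steps `β j` on a geometric partition of `(0, ∞)`. For
`r = ∞` evaluate at the left endpoints; for finite `r` integrate `dt / t` over each step.
-/

open Function

section Rearrangement

variable {X : Type*} [MeasurableSpace X] {μ : Measure X} {g : X → ℝ≥0∞}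

theorem le_rearr_of_lt_measure {A : Set X} {v : ℝ≥0∞} {t : ℝ}
    (hA : ENNReal.ofReal t < μ A) (hv : ∀ᵐ x ∂μ, x ∈ A → v ≤ g x) : v ≤ rearr μ g t := by
  refine le_sInf fun s hs => le_of_not_gt fun hsv => ?_
  have hA_le : μ A ≤ distFn μ g s :=
    measure_mono_ae (by filter_upwards [hv] with x hx hxA using hsv.trans_le (hx hxA))
  exact (hA.trans_le hA_le).not_ge hs

theorem le_rearr_of_tsum_indicator_le {ι : Type*} {A : ι → Set X} {c : ι → ℝ≥0∞}
    (hg : ∀ᵐ x ∂μ, ∑' i, c i * (A i).indicator (fun _ => (1 : ℝ≥0∞)) x ≤ g x)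
    {i : ι} {t : ℝ} (ht : ENNReal.ofReal t < μ (A i)) : c i ≤ rearr μ g t := by
  refine le_rearr_of_lt_measure ht ?_
  filter_upwards [hg] with x hx hxA
  calc c i = c i * (A i).indicator (fun _ => (1 : ℝ≥0∞)) x := by simp [hxA]
    _ ≤ _ := ENNReal.le_tsum (f := fun i => c i * (A i).indicator (fun _ => (1 : ℝ≥0∞)) x) i
    _ ≤ g x := hx

end Rearrangement

theorem mul_zpow_sub_one_rpow_mul_rpow_neg_div {b ρ p : ℝ} (hb : 0 ≤ b) (hρ : 0 < ρ) (j : ℤ) :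
    (b * ρ ^ (j - 1)) ^ (1 / p) * ρ ^ (-(j : ℝ) / p) = (b / ρ) ^ (1 / p) := by
  have hsplit : b * ρ ^ (j - 1) = b / ρ * ρ ^ (j : ℝ) := by
    rw [zpow_sub_one₀ hρ.ne', Real.rpow_intCast]; ring
  rw [hsplit, Real.mul_rpow (by positivity) (by positivity), ← Real.rpow_mul hρ.le, mul_assoc,
    ← Real.rpow_add hρ, mul_one_div, ← add_div, add_neg_cancel, zero_div, Real.rpow_zero,
    mul_one]

theorem ofReal_mul_le_rpow_mul_rearr {X : Type*} [MeasurableSpace X] {μ : Measure X}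
    {A : ℤ → Set X} {β : ℤ → ℝ} {g : X → ℝ≥0∞} {b ρ p : ℝ} (hb : 0 < b) (hρ : 1 < ρ) (hp : 0 < p)
    (hA : ∀ j, β j ≠ 0 → ENNReal.ofReal (b * ρ ^ j) ≤ μ (A j))
    (hg : ∀ᵐ x ∂μ, ∑' j : ℤ, ENNReal.ofReal (β j * ρ ^ (-(j : ℝ) / p)) *
      (A j).indicator (fun _ => (1 : ℝ≥0∞)) x ≤ g x)
    {j : ℤ} {t : ℝ} (ht : t ∈ Ico (b * ρ ^ (j - 1)) (b * ρ ^ j)) :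
    ENNReal.ofReal ((b / ρ) ^ (1 / p) * β j) ≤ ENNReal.ofReal t ^ (1 / p) * rearr μ g t := by
  by_cases hβ : β j = 0
  · simp [hβ]
  have hρ0 : 0 < ρ := one_pos.trans hρ
  have ht0 : 0 < t := (mul_pos hb (zpow_pos hρ0 _)).trans_le ht.1
  calc ENNReal.ofReal ((b / ρ) ^ (1 / p) * β j)
      = ENNReal.ofReal ((b * ρ ^ (j - 1)) ^ (1 / p)) *
          ENNReal.ofReal (β j * ρ ^ (-(j : ℝ) / p)) := by
        rw [← ENNReal.ofReal_mul (by positivity),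
          ← mul_zpow_sub_one_rpow_mul_rpow_neg_div hb.le hρ0]
        ring_nf
    _ ≤ ENNReal.ofReal t ^ (1 / p) * rearr μ g t := by
      refine mul_le_mul' ?_ (le_rearr_of_tsum_indicator_le hg ?_)
      · rw [ENNReal.ofReal_rpow_of_pos ht0]
        exact ENNReal.ofReal_le_ofReal (Real.rpow_le_rpow (by positivity) ht.1 (by positivity))
      · exact ((ENNReal.ofReal_lt_ofReal_iff (mul_pos hb (zpow_pos hρ0 j))).2 ht.2).trans_le
          (hA j hβ)

theorem tsum_mul_measure_le_setLIntegral_iUnion {α ι : Type*} [MeasurableSpace α] [Countable ι]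
    {μ : Measure α} {S : ι → Set α} (hS : ∀ i, MeasurableSet (S i))
    (hd : Pairwise (Disjoint on S)) {F : α → ℝ≥0∞} {c : ι → ℝ≥0∞}
    (hc : ∀ i, ∀ x ∈ S i, c i ≤ F x) : ∑' i, c i * μ (S i) ≤ ∫⁻ x in ⋃ i, S i, F x ∂μ := by
  rw [lintegral_iUnion hS hd]
  exact ENNReal.tsum_le_tsum fun i =>
    (setLIntegral_const (S i) (c i)).symm.trans_le (setLIntegral_mono' (hS i) (hc i))

theorem Monotone.pairwise_disjoint_on_Ico_sub_one {β : Type*} [Preorder β] {a : ℤ → β}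
    (ha : Monotone a) : Pairwise (Disjoint on fun j => Ico (a (j - 1)) (a j)) := by
  simpa [Order.succ_eq_add_one] using
    (ha.comp fun i j hij => Int.sub_le_sub_right hij 1).pairwise_disjoint_on_Ico_succ

theorem iSup_le_lorentzTop {ι : Type*} {X : Type*} [MeasurableSpace X] {μ : Measure X}
    {g : X → ℝ≥0∞} {p : ℝ} {d : ι → ℝ≥0∞} {t : ι → ℝ} (ht : ∀ i, 0 < t i)
    (hd : ∀ i, d i ≤ ENNReal.ofReal (t i) ^ (1 / p) * rearr μ g (t i)) :
    ⨆ i, d i ≤ lorentzTop μ g p :=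
  iSup_le fun i => (hd i).trans (le_biSup (fun t => ENNReal.ofReal t ^ (1 / p) * rearr μ g t)
    (show t i ∈ Ioi 0 from ht i))

theorem ofReal_rpow_mul_tsum_rpow_le_lorentzR {X : Type*} [MeasurableSpace X] {μ : Measure X}
    {g : X → ℝ≥0∞} {b ρ p r : ℝ} (hb : 0 < b) (hρ : 1 < ρ) (hr : 0 < r) {d : ℤ → ℝ≥0∞}
    (hd : ∀ j : ℤ, ∀ t ∈ Ico (b * ρ ^ (j - 1)) (b * ρ ^ j),
      d j ≤ ENNReal.ofReal t ^ (1 / p) * rearr μ g t) :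
    ENNReal.ofReal (r / p * (1 - ρ⁻¹)) ^ (1 / r) * (∑' j, d j ^ r) ^ (1 / r) ≤
      lorentzR μ g p r := by
  have hρ0 : 0 < ρ := one_pos.trans hρ
  have hpos : ∀ j : ℤ, 0 < b * ρ ^ j := fun j => mul_pos hb (zpow_pos hρ0 j)
  have hmono : Monotone fun j : ℤ => b * ρ ^ j := fun i j hij =>
    mul_le_mul_of_nonneg_left (zpow_le_zpow_right₀ hρ.le hij) hb.le
  have hvol : ∀ j : ℤ, ENNReal.ofReal (b * ρ ^ j)⁻¹ * volume (Ico (b * ρ ^ (j - 1)) (b * ρ ^ j))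
      = ENNReal.ofReal (1 - ρ⁻¹) := fun j => by
    rw [Real.volume_Ico, ← ENNReal.ofReal_mul (inv_pos.2 (hpos j)).le, zpow_sub_one₀ hρ0.ne']
    congr 1
    field_simp [(hpos j).ne']
  have hlow : ∀ j : ℤ, ∀ t ∈ Ico (b * ρ ^ (j - 1)) (b * ρ ^ j),
      d j ^ r * ENNReal.ofReal (b * ρ ^ j)⁻¹
        ≤ (ENNReal.ofReal t ^ (1 / p) * rearr μ g t) ^ r * ENNReal.ofReal t⁻¹ := fun j t ht =>
    mul_le_mul' (ENNReal.rpow_le_rpow (hd j t ht) hr.le)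
      (ENNReal.ofReal_le_ofReal (inv_anti₀ ((hpos _).trans_le ht.1) ht.2.le))
  have hint : ENNReal.ofReal (1 - ρ⁻¹) * ∑' j, d j ^ r ≤ ∫⁻ t in Ioi (0 : ℝ),
      (ENNReal.ofReal t ^ (1 / p) * rearr μ g t) ^ r * ENNReal.ofReal t⁻¹ := calc
    _ = ∑' j : ℤ, d j ^ r * ENNReal.ofReal (b * ρ ^ j)⁻¹ *
          volume (Ico (b * ρ ^ (j - 1)) (b * ρ ^ j)) := by
      simp_rw [mul_assoc, hvol, ← ENNReal.tsum_mul_left, mul_comm]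
    _ ≤ ∫⁻ t in ⋃ j : ℤ, Ico (b * ρ ^ (j - 1)) (b * ρ ^ j),
          (ENNReal.ofReal t ^ (1 / p) * rearr μ g t) ^ r * ENNReal.ofReal t⁻¹ :=
      tsum_mul_measure_le_setLIntegral_iUnion (fun _ => measurableSet_Ico)
        hmono.pairwise_disjoint_on_Ico_sub_one hlow
    _ ≤ _ := lintegral_mono_set (iUnion_subset fun j t ht => (hpos _).trans_le ht.1)
  calc _ = (ENNReal.ofReal (r / p) * (ENNReal.ofReal (1 - ρ⁻¹) * ∑' j, d j ^ r)) ^ (1 / r) := by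
        rw [← ENNReal.mul_rpow_of_nonneg _ _ (by positivity),
          ENNReal.ofReal_mul' (sub_nonneg.2 (inv_le_one_of_one_le₀ hρ.le)), mul_assoc]
    _ ≤ lorentzR μ g p r := ENNReal.rpow_le_rpow (mul_le_mul' le_rfl hint) (by positivity)

theorem ellr_const_mul {ι : Type*} {r : ℝ≥0∞} (hr : r ≠ 0) (a : ℝ≥0∞) (c : ι → ℝ≥0∞) :
    ellr r (fun i => a * c i) = a * ellr r c := by
  unfold ellr
  split_ifs with htop
  · exact (ENNReal.mul_iSup ..).symm
  · have hr' : 0 < r.toReal := ENNReal.toReal_pos hr htop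
    simp_rw [ENNReal.mul_rpow_of_nonneg _ _ hr'.le, ENNReal.tsum_mul_left,
      ENNReal.mul_rpow_of_nonneg _ _ (one_div_nonneg.2 hr'.le), one_div,
      ENNReal.rpow_rpow_inv hr'.ne']

/-- `1 - ρ⁻¹` is the length of `[b * ρ ^ (j - 1), b * ρ ^ j)` relative to its right endpoint, and
`r / p` is the normalisation of `lorentzR`. -/
noncomputable def geometricLorentzConst (p ρ : ℝ) (r : ℝ≥0∞) : ℝ :=
  if r = ∞ then 1 else (r.toReal / p * (1 - ρ⁻¹)) ^ (1 / r.toReal)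

theorem geometricLorentzConst_pos {p ρ : ℝ} {r : ℝ≥0∞} (hp : 0 < p) (hρ : 1 < ρ) (hr : 0 < r) :
    0 < geometricLorentzConst p ρ r := by
  unfold geometricLorentzConst
  split_ifs with htop
  · exact one_pos
  · have : 0 < 1 - ρ⁻¹ := sub_pos.2 (inv_lt_one_of_one_lt₀ hρ)
    have : 0 < r.toReal := ENNReal.toReal_pos hr.ne' htop
    positivity

theorem ofReal_mul_ellr_le_lorentz {X : Type*} [MeasurableSpace X] {μ : Measure X}
    {g : X → ℝ≥0∞} {b ρ p : ℝ} {r : ℝ≥0∞} (hb : 0 < b) (hρ : 1 < ρ) (hp : 0 < p) (hr : 0 < r)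
    {d : ℤ → ℝ≥0∞} (hd : ∀ j : ℤ, ∀ t ∈ Ico (b * ρ ^ (j - 1)) (b * ρ ^ j),
      d j ≤ ENNReal.ofReal t ^ (1 / p) * rearr μ g t) :
    ENNReal.ofReal (geometricLorentzConst p ρ r) * ellr r d ≤ lorentz μ g p r := by
  unfold geometricLorentzConst ellr lorentz
  split_ifs with htop
  · have hρ0 : 0 < ρ := one_pos.trans hρ
    rw [ENNReal.ofReal_one, one_mul]
    refine iSup_le_lorentzTop (fun j => mul_pos hb (zpow_pos hρ0 (j - 1)))
      fun j => hd j _ ⟨le_rfl, ?_⟩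
    exact mul_lt_mul_of_pos_left (zpow_lt_zpow_right₀ hρ (sub_one_lt j)) hb
  · have hr' : 0 < r.toReal := ENNReal.toReal_pos hr.ne' htop
    rw [← ENNReal.ofReal_rpow_of_nonneg _ (one_div_nonneg.2 hr'.le)]
    · exact ofReal_rpow_mul_tsum_rpow_le_lorentzR hb hρ hr' hd
    · exact mul_nonneg (div_nonneg hr'.le hp.le) (sub_nonneg.2 (inv_le_one_of_one_le₀ hρ.le))

theorem stmt16 (b ρ p : ℝ) (r : ℝ≥0∞)
    (hb : 0 < b) (hρ : 1 < ρ) (hp : 0 < p) (hr : 0 < r) :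
    ∃ c : ℝ, 0 < c ∧
      ∀ {X : Type*} [MeasurableSpace X] (μ : Measure X)
        (Z : Set ℤ) (A : ℤ → Set X) (β : ℤ → ℝ) (f : X → ℝ),
        Measurable f → (∀ j, MeasurableSet (A j)) → (∀ j, 0 ≤ β j) →
        (∀ j ∉ Z, β j = 0) →
        (∀ j ∈ Z, ENNReal.ofReal (b * ρ ^ j) ≤ μ (A j)) →
        (∀ᵐ x ∂μ,
          ∑' j : ℤ, ENNReal.ofReal (β j * ρ ^ (-(j : ℝ) / p)) *
              (A j).indicator (fun _ => (1 : ℝ≥0∞)) x ≤ eAbs f x) →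
        ENNReal.ofReal c * ellr r (fun j => ENNReal.ofReal (β j))
          ≤ lorentz μ (eAbs f) p r := by
  have hC : 0 < (b / ρ) ^ (1 / p) := Real.rpow_pos_of_pos (div_pos hb (one_pos.trans hρ)) _
  refine ⟨(b / ρ) ^ (1 / p) * geometricLorentzConst p ρ r,
    mul_pos hC (geometricLorentzConst_pos hp hρ hr), ?_⟩
  intro X _ μ Z A β f _ _ _ hZ hA hae
  have hA' : ∀ j, β j ≠ 0 → ENNReal.ofReal (b * ρ ^ j) ≤ μ (A j) := fun j hβ =>
    hA j (by_contra fun hj => hβ (hZ j hj))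
  calc ENNReal.ofReal ((b / ρ) ^ (1 / p) * geometricLorentzConst p ρ r) *
        ellr r (fun j => ENNReal.ofReal (β j))
      = ENNReal.ofReal (geometricLorentzConst p ρ r) *
          ellr r (fun j => ENNReal.ofReal ((b / ρ) ^ (1 / p) * β j)) := by
        simp_rw [ENNReal.ofReal_mul hC.le, ellr_const_mul hr.ne']
        ring
    _ ≤ lorentz μ (eAbs f) p r :=
      ofReal_mul_ellr_le_lorentz hb hρ hp hr fun _ _ ht =>
        ofReal_mul_le_rpow_mul_rearr hb hρ hp hA' hae ht
end
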